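/- arXiv:1209.5802 — 2 statements merged into one kernel-verified Lean document; each statement's English description precedes it below -/
import Mathlib

section
/- Let β > 0 and let M be a positive integer with M ≥ β. Set β' = β/M. Then for all ρ_1, …, ρ_M ∈ [0,1], | Σ_{i=1}^M log(1 + ρ_i·(exp(−β') − 1)) + β'·Σ_{i=1}^M ρ_i | ≤ 4·β²/M. -/
/-!
Write `b = β / M`. Each summand `log (1 + r (e^{-b} - 1)) + b r` with `r ∈ [0, 1]` lies in
`[0, b²]`: convexity of `exp` gives `e^{-b r} ≤ 1 + r (e^{-b} - 1)`, hence the lower bound, and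
`log y ≤ y - 1` reduces the upper bound to `e^{-b} - 1 + b ≤ b²`. Summing `M` summands gives
`0 ≤ ∑ ≤ M b² = β² / M`.
-/

open Real Finset

namespace Real

lemma exp_mul_le_one_add_mul_exp_sub_one (a : ℝ) {r : ℝ} (hr : r ∈ Set.Icc (0 : ℝ) 1) :
    exp (r * a) ≤ 1 + r * (exp a - 1) := by
  have h := convexOn_exp.2 (Set.mem_univ 0) (Set.mem_univ a) (sub_nonneg.2 hr.2) hr.1
    (sub_add_cancel 1 r)
  simp only [smul_eq_mul, mul_zero, zero_add, exp_zero, mul_one] at h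
  linarith

lemma exp_neg_sub_one_add_le_sq {b : ℝ} (hb : 0 ≤ b) : exp (-b) - 1 + b ≤ b ^ 2 := by
  -- `e^{-b} - 1 + b ≤ b (1 - e^{-b}) ≤ b²`
  have h₁ : (1 + b) * exp (-b) ≤ 1 := by
    calc (1 + b) * exp (-b) ≤ exp b * exp (-b) := by
          gcongr; linarith [add_one_le_exp b]
      _ = 1 := by rw [← exp_add, add_neg_cancel, exp_zero]
  have h₂ : b * (1 - exp (-b)) ≤ b * b :=
    mul_le_mul_of_nonneg_left (by linarith [one_sub_le_exp_neg b]) hb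
  nlinarith

lemma log_one_add_mul_exp_neg_sub_one_add_mul_nonneg (b : ℝ) {r : ℝ}
    (hr : r ∈ Set.Icc (0 : ℝ) 1) : 0 ≤ log (1 + r * (exp (-b) - 1)) + b * r := by
  have h := exp_mul_le_one_add_mul_exp_sub_one (-b) hr
  have h' : -(b * r) ≤ log (1 + r * (exp (-b) - 1)) := by
    rw [← log_exp (-(b * r))]
    exact log_le_log (exp_pos _) (by rwa [show -(b * r) = r * -b by ring])
  linarith

lemma log_one_add_mul_exp_neg_sub_one_add_mul_le_sq {b : ℝ} (hb : 0 ≤ b) {r : ℝ}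
    (hr : r ∈ Set.Icc (0 : ℝ) 1) : log (1 + r * (exp (-b) - 1)) + b * r ≤ b ^ 2 := by
  have hpos : 0 < 1 + r * (exp (-b) - 1) :=
    (exp_pos _).trans_le (exp_mul_le_one_add_mul_exp_sub_one (-b) hr)
  have hlog := log_le_sub_one_of_pos hpos
  have hsq := exp_neg_sub_one_add_le_sq hb
  have hr' : r * (exp (-b) - 1 + b) ≤ exp (-b) - 1 + b :=
    mul_le_of_le_one_left (by linarith [one_sub_le_exp_neg b]) hr.2
  nlinarith

lemma abs_log_one_add_mul_exp_neg_sub_one_add_mul_le_sq {b : ℝ} (hb : 0 ≤ b) {r : ℝ}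
    (hr : r ∈ Set.Icc (0 : ℝ) 1) : |log (1 + r * (exp (-b) - 1)) + b * r| ≤ b ^ 2 :=
  abs_le.2 ⟨by linarith [log_one_add_mul_exp_neg_sub_one_add_mul_nonneg b hr, sq_nonneg b],
    log_one_add_mul_exp_neg_sub_one_add_mul_le_sq hb hr⟩

end Real

theorem log_sum_close_to_linear_general
    (β : ℝ) (hβ : 0 < β) {M : ℕ}
    (ρ : Fin M → ℝ) (hρ : ∀ i, ρ i ∈ Set.Icc (0 : ℝ) 1) :
    |(∑ i, Real.log (1 + ρ i * (Real.exp (-(β / M)) - 1)))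
        + (β / M) * ∑ i, ρ i| ≤ 4 * β ^ 2 / M := by
  have hb : 0 ≤ β / M := by positivity
  calc |(∑ i, log (1 + ρ i * (exp (-(β / M)) - 1))) + (β / M) * ∑ i, ρ i|
      = |∑ i, (log (1 + ρ i * (exp (-(β / M)) - 1)) + β / M * ρ i)| := by
        rw [sum_add_distrib, mul_sum]
    _ ≤ ∑ i, |log (1 + ρ i * (exp (-(β / M)) - 1)) + β / M * ρ i| := abs_sum_le_sum_abs _ _
    _ ≤ ∑ _i : Fin M, (β / M) ^ 2 :=
        sum_le_sum fun i _ => abs_log_one_add_mul_exp_neg_sub_one_add_mul_le_sq hb (hρ i)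
    _ = β ^ 2 / M := by
        rw [sum_const, card_univ, Fintype.card_fin, nsmul_eq_mul]
        rcases eq_or_ne (M : ℝ) 0 with hM | hM
        · simp [hM]
        · field_simp
    _ ≤ 4 * β ^ 2 / M := by gcongr; linarith [sq_nonneg β]

/-- With `β > 0`, `M ≥ β` a positive integer, `β' = β / M` and densities `ρ i ∈ [0,1]`,
the exponent of the new mesoscopic model is within `4β²/M` of the exponent `-β'∑ρᵢ`
of the original model:
`|∑ i, log (1 + ρ i * (exp (-β') - 1)) + β' * ∑ i, ρ i| ≤ 4 * β² / M`. -/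
theorem log_sum_close_to_linear
    (β : ℝ) (hβ : 0 < β) {M : ℕ} (hM : 0 < M) (hMβ : β ≤ (M : ℝ))
    (ρ : Fin M → ℝ) (hρ : ∀ i, ρ i ∈ Set.Icc (0 : ℝ) 1) :
    |(∑ i, Real.log (1 + ρ i * (Real.exp (-(β / M)) - 1)))
        + (β / M) * ∑ i, ρ i| ≤ 4 * β ^ 2 / M :=
  log_sum_close_to_linear_general β hβ ρ hρ
end

section
/- Let β > 0 and let M be a positive integer with M ≥ β. Set β' = β/M. Then for all ρ_1, …, ρ_M ∈ [0,1], | Π_{i=1}^M (1 + ρ_i·(exp(−β') − 1)) − exp(−β'·Σ_{i=1}^M ρ_i) | ≤ 4·β²/M. -/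
/-!
Write `t = β / M`. Since `exp (-(t * ∑ i, ρ i)) = ∏ i, exp (-(t * ρ i))`, both slowdown factors are
products of `M` factors in `[-1, 1]`, and telescoping bounds their difference by the sum of the
factorwise differences. Splitting off the linear term, each of these is
`ρ (e^{-t} - 1 + t) - (e^{-tρ} - 1 + tρ)`, a difference of two numbers in `[0, t²]`, because
`0 ≤ e^{-s} - 1 + s ≤ s²` for `s ≥ 0`. Summing gives `M t² = β² / M`.
-/

open Real Finset

theorem norm_prod_sub_prod_le_sum_norm_sub {ι R : Type*} [NormedCommRing R] [NormOneClass R]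
    (s : Finset ι) {f g : ι → R} (hf : ∀ i ∈ s, ‖f i‖ ≤ 1) (hg : ∀ i ∈ s, ‖g i‖ ≤ 1) :
    ‖∏ i ∈ s, f i - ∏ i ∈ s, g i‖ ≤ ∑ i ∈ s, ‖f i - g i‖ := by
  classical
  induction s using Finset.induction with
  | empty => simp
  | @insert a s ha ih =>
    have hgs : ‖∏ i ∈ s, g i‖ ≤ 1 :=
      (norm_prod_le s g).trans (prod_le_one (fun _ _ => norm_nonneg _)
        fun i hi => hg i (mem_insert_of_mem hi))
    have ih := ih (fun i hi => hf i (mem_insert_of_mem hi)) fun i hi => hg i (mem_insert_of_mem hi)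
    rw [prod_insert ha, prod_insert ha, sum_insert ha]
    calc ‖f a * ∏ i ∈ s, f i - g a * ∏ i ∈ s, g i‖
        = ‖f a * (∏ i ∈ s, f i - ∏ i ∈ s, g i) + (f a - g a) * ∏ i ∈ s, g i‖ := by ring_nf
      _ ≤ ‖f a‖ * ‖∏ i ∈ s, f i - ∏ i ∈ s, g i‖ + ‖f a - g a‖ * ‖∏ i ∈ s, g i‖ :=
          (norm_add_le _ _).trans (add_le_add (norm_mul_le _ _) (norm_mul_le _ _))
      _ ≤ 1 * ∑ i ∈ s, ‖f i - g i‖ + ‖f a - g a‖ * 1 := by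
          gcongr
          exact hf a (mem_insert_self a s)
      _ = ‖f a - g a‖ + ∑ i ∈ s, ‖f i - g i‖ := by ring

theorem Real.exp_neg_le_one_sub_add_sq {s : ℝ} (hs : 0 ≤ s) : exp (-s) ≤ 1 - s + s ^ 2 := by
  have hpos : 0 < 1 + s := by linarith
  calc exp (-s) ≤ (1 + s)⁻¹ := by
        rw [exp_neg]
        exact inv_anti₀ hpos (by linarith [add_one_le_exp s])
    _ = 1 - s + s ^ 2 - s ^ 3 / (1 + s) := by field_simp; ring
    _ ≤ 1 - s + s ^ 2 := by
        have : 0 ≤ s ^ 3 / (1 + s) := by positivity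
        linarith

theorem abs_one_add_mul_exp_neg_sub_one_le_one {t p : ℝ} (ht : 0 ≤ t) (hp : p ∈ Set.Icc (0 : ℝ) 1) :
    |1 + p * (exp (-t) - 1)| ≤ 1 := by
  have h₁ : exp (-t) ≤ 1 := exp_le_one_iff.mpr (by linarith)
  rw [abs_le]
  constructor <;> nlinarith [hp.1, hp.2, exp_pos (-t)]

theorem abs_one_add_mul_exp_neg_sub_one_sub_exp_neg_mul_le {t p : ℝ} (ht : 0 ≤ t)
    (hp : p ∈ Set.Icc (0 : ℝ) 1) :
    |1 + p * (exp (-t) - 1) - exp (-(t * p))| ≤ t ^ 2 := by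
  obtain ⟨hp₀, hp₁⟩ := hp
  have htp : 0 ≤ t * p := mul_nonneg ht hp₀
  have hp_sq : (t * p) ^ 2 ≤ t ^ 2 := by
    rw [mul_pow]; exact mul_le_of_le_one_right (sq_nonneg t) (pow_le_one₀ hp₀ hp₁)
  have hupper : p * (exp (-t) - 1 + t) ≤ t ^ 2 := by
    nlinarith [exp_neg_le_one_sub_add_sq ht, one_sub_le_exp_neg t, sq_nonneg t]
  have hlower : 0 ≤ p * (exp (-t) - 1 + t) :=
    mul_nonneg hp₀ (by linarith [one_sub_le_exp_neg t])
  rw [abs_le]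
  constructor
  · linarith [exp_neg_le_one_sub_add_sq htp]
  · linarith [one_sub_le_exp_neg (t * p)]

theorem rate_difference_bound_general
    (β : ℝ) (hβ : 0 < β) {M : ℕ}
    (ρ : Fin M → ℝ) (hρ : ∀ i, ρ i ∈ Set.Icc (0 : ℝ) 1) :
    |(∏ i, (1 + ρ i * (Real.exp (-(β / M)) - 1)))
        - Real.exp (-((β / M) * ∑ i, ρ i))| ≤ 4 * β ^ 2 / M := by
  set t := β / M
  have ht : 0 ≤ t := by positivity
  have hexp : exp (-(t * ∑ i, ρ i)) = ∏ i, exp (-(t * ρ i)) := by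
    rw [← exp_sum, mul_sum, sum_neg_distrib]
  have htelescope := norm_prod_sub_prod_le_sum_norm_sub univ
    (f := fun i => 1 + ρ i * (exp (-t) - 1)) (g := fun i => exp (-(t * ρ i)))
    (fun i _ => abs_one_add_mul_exp_neg_sub_one_le_one ht (hρ i))
    (fun i _ => by
      rw [Real.norm_eq_abs, abs_of_pos (exp_pos _), exp_le_one_iff]
      exact neg_nonpos.mpr (mul_nonneg ht (hρ i).1))
  simp only [Real.norm_eq_abs] at htelescope
  rw [hexp]
  calc _ ≤ ∑ i, |1 + ρ i * (exp (-t) - 1) - exp (-(t * ρ i))| := htelescope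
    _ ≤ ∑ _i : Fin M, t ^ 2 :=
        sum_le_sum fun i _ => abs_one_add_mul_exp_neg_sub_one_sub_exp_neg_mul_le ht (hρ i)
    _ = β ^ 2 / M := by
        rcases eq_or_ne (M : ℝ) 0 with hM | hM
        · simp [t, hM]
        · simp only [sum_const, card_univ, Fintype.card_fin, nsmul_eq_mul, t]
          field_simp
    _ ≤ 4 * β ^ 2 / M := by gcongr; linarith [sq_nonneg β]

/-- With `β > 0`, `M ≥ β` a positive integer, `β' = β / M` and densities `ρ i ∈ [0,1]`,
the slowdown factors of the new and original mesoscopic models differ by at most `4β²/M`: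
`|∏ i, (1 + ρ i * (exp (-β') - 1)) - exp (-β' * ∑ i, ρ i)| ≤ 4 * β² / M`. -/
theorem rate_difference_bound
    (β : ℝ) (hβ : 0 < β) {M : ℕ} (hM : 0 < M) (hMβ : β ≤ (M : ℝ))
    (ρ : Fin M → ℝ) (hρ : ∀ i, ρ i ∈ Set.Icc (0 : ℝ) 1) :
    |(∏ i, (1 + ρ i * (Real.exp (-(β / M)) - 1)))
        - Real.exp (-((β / M) * ∑ i, ρ i))| ≤ 4 * β ^ 2 / M :=
  rate_difference_bound_general β hβ ρ hρ
end
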